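/- arXiv:2412.03127 — 3 statements merged into one kernel-verified Lean document; each statement's English description precedes it below -/
import Mathlib

section
/- For all natural numbers x, the triple nested sum over i1 from 0 to x, i2 from 0 to 2*i1, and i3 from 0 to (3*i2)/2 of 1 equals (x+1)^3. -/
lemma moessner_inner_aux (n : ℕ) :
    ∑ i2 ∈ Finset.range (2 * n + 1), ((3 * i2) / 2 + 1) = 3 * n ^ 2 + 3 * n + 1 := by
  induction n with
  | zero => simp
  | succ n ih =>
    have h : 2 * (n + 1) + 1 = (2 * n + 1) + 1 + 1 := by ring
    rw [h, Finset.sum_range_succ, Finset.sum_range_succ, ih]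
    have h1 : (3 * (2 * n + 1)) / 2 = 3 * n + 1 := by omega
    have h2 : (3 * (2 * n + 1 + 1)) / 2 = 3 * n + 3 := by omega
    rw [h1, h2]; ring

theorem moessner_exponent_three (x : ℕ) :
    ∑ i1 ∈ Finset.range (x + 1), ∑ i2 ∈ Finset.range (2 * i1 + 1),
      ∑ i3 ∈ Finset.range ((3 * i2) / 2 + 1), (1 : ℕ) = (x + 1) ^ 3 := by
  have key : ∀ i1, ∑ i2 ∈ Finset.range (2 * i1 + 1),
      ∑ i3 ∈ Finset.range ((3 * i2) / 2 + 1), (1 : ℕ) = 3 * i1 ^ 2 + 3 * i1 + 1 := by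
    intro i1
    simp only [Finset.sum_const, smul_eq_mul, mul_one, Finset.card_range]
    exact moessner_inner_aux i1
  simp only [key]
  induction x with
  | zero => simp
  | succ n ih =>
    rw [Finset.sum_range_succ, ih]; ring
end

section
/- For all natural numbers x, the fourfold nested sum over i1 from 0 to x, i2 from 0 to 2*i1, i3 from 0 to (3*i2)/2, and i4 from 0 to (4*i3)/3 of 1 equals (x+1)^4. -/
lemma L1 (n : ℕ) : ∑ i ∈ Finset.range (n+1), (4*i/3+1) = (2*n^2+4*n+3)/3 := by
  induction n with
  | zero => norm_num
  | succ n ih =>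
    rw [Finset.sum_range_succ, ih]
    have h : (n+1)^2 = n^2+2*n+1 := by ring
    have hm : n^2 % 3 = (n % 3)^2 % 3 := Nat.pow_mod n 2 3
    have h3 : n % 3 = 0 ∨ n % 3 = 1 ∨ n % 3 = 2 := by omega
    rcases h3 with h3 | h3 | h3 <;> rw [h3] at hm <;> norm_num at hm <;> omega

lemma L2 (i1 : ℕ) :
    ∑ i2 ∈ Finset.range (2*i1+1), ((2*(3*i2/2)^2+4*(3*i2/2)+3)/3)
      = 4*i1^3+6*i1^2+4*i1+1 := by
  induction i1 with
  | zero => norm_num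
  | succ i1 ih =>
    have e : 2*(i1+1)+1 = (2*i1+1)+1+1 := by ring
    rw [e, Finset.sum_range_succ, Finset.sum_range_succ, ih]
    have h1 : 3*(2*i1+1)/2 = 3*i1+1 := by omega
    have h2 : 3*(2*i1+1+1)/2 = 3*i1+3 := by omega
    rw [h1, h2]
    have t1 : (2*(3*i1+1)^2+4*(3*i1+1)+3)/3 = 6*i1^2+8*i1+3 := by
      have : (3*i1+1)^2 = 9*i1^2+6*i1+1 := by ring
      omega
    have t2 : (2*(3*i1+3)^2+4*(3*i1+3)+3)/3 = 6*i1^2+16*i1+11 := by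
      have : (3*i1+3)^2 = 9*i1^2+18*i1+9 := by ring
      omega
    rw [t1, t2]; ring

lemma L3 (x : ℕ) : ∑ i ∈ Finset.range (x+1), (4*i^3+6*i^2+4*i+1) = (x+1)^4 := by
  induction x with
  | zero => norm_num
  | succ x ih =>
    rw [Finset.sum_range_succ, ih]; ring

theorem moessner_exponent_four (x : ℕ) :
    ∑ i1 ∈ Finset.range (x + 1), ∑ i2 ∈ Finset.range (2 * i1 + 1),
      ∑ i3 ∈ Finset.range ((3 * i2) / 2 + 1),
        ∑ i4 ∈ Finset.range ((4 * i3) / 3 + 1), (1 : ℕ) = (x + 1) ^ 4 := by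
  simp only [Finset.sum_const, Finset.card_range, smul_eq_mul, mul_one, L1, L2]
  exact L3 x
end

section
/- Define C : ℕ → ℕ → ℕ by C 0 x = 1 and C (n+1) x = sum over i from 0 to x (inclusive) of C n (i + 1). Then for all natural numbers n, C n 0 equals the n-th Catalan number. -/
def C : ℕ → ℕ → ℕ
  | 0, _ => 1
  | n + 1, x => ∑ i ∈ Finset.range (x + 1), C n (i + 1)

open Finset

lemma catalan_succ_range (n : ℕ) :
    catalan (n + 1) = ∑ i ∈ range (n + 1), catalan i * catalan (n - i) := by
  rw [catalan_succ]
  exact Fin.sum_univ_eq_sum_range (fun i => catalan i * catalan (n - i)) (n + 1)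

lemma C_step (n x : ℕ) : C (n + 1) (x + 1) = C (n + 1) x + C n (x + 2) := by
  show (∑ i ∈ range (x + 2), C n (i + 1)) = _
  rw [Finset.sum_range_succ]
  rfl

lemma key : ∀ n, ∀ x, C n (x + 1) = ∑ i ∈ range (n + 1), catalan i * C (n - i) x := by
  intro n
  induction n using Nat.strong_induction_on with
  | _ n ih =>
    match n with
    | 0 => intro x; simp [C, catalan_zero]
    | n + 1 =>
      intro x
      rw [C_step, ih n (Nat.lt_succ_self n) (x + 1)]
      have h1 : ∑ i ∈ range (n + 1), catalan i * C (n - i) (x + 1)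
          = ∑ i ∈ range (n + 1), ∑ j ∈ range (n + 1 - i),
              catalan i * catalan j * C (n - i - j) x := by
        refine Finset.sum_congr rfl fun i hi => ?_
        have hi' : i < n + 1 := mem_range.mp hi
        rw [ih (n - i) (by omega) x, Finset.mul_sum]
        have : n - i + 1 = n + 1 - i := by omega
        rw [this]
        exact Finset.sum_congr rfl fun j _ => by ring
      rw [h1, ← Finset.sum_range_diag_flip (n + 1)
        (fun k m => catalan k * catalan m * C (n - k - m) x)]
      have h2 : ∑ m ∈ range (n + 1), ∑ k ∈ range (m + 1),
          catalan k * catalan (m - k) * C (n - k - (m - k)) x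
          = ∑ m ∈ range (n + 1), catalan (m + 1) * C (n + 1 - (m + 1)) x := by
        refine Finset.sum_congr rfl fun m hm => ?_
        have hm' : m < n + 1 := mem_range.mp hm
        have : ∀ k ∈ range (m + 1), catalan k * catalan (m - k) * C (n - k - (m - k)) x
            = catalan k * catalan (m - k) * C (n - m) x := by
          intro k hk
          have : k ≤ m := Nat.lt_succ_iff.mp (mem_range.mp hk)
          congr 2
          omega
        rw [Finset.sum_congr rfl this, ← Finset.sum_mul, ← catalan_succ_range]
        congr 2
        omega
      rw [h2, Finset.sum_range_succ' (fun i => catalan i * C (n + 1 - i) x) (n + 1)]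
      simp [catalan_zero, add_comm]

theorem nested_sums_catalan (n : ℕ) : C n 0 = catalan n := by
  induction n using Nat.strong_induction_on with
  | _ n ih =>
    match n with
    | 0 => simp [C, catalan_zero]
    | n + 1 =>
      have : C (n + 1) 0 = C n 1 := by
        show (∑ i ∈ range 1, C n (i + 1)) = C n 1
        simp
      rw [this, key n 0, catalan_succ_range]
      refine Finset.sum_congr rfl fun i hi => ?_
      rw [ih (n - i) (by omega)]
end
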